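/- arXiv:2404.02314 — 3 statements merged into one kernel-verified Lean document; each statement's English description precedes it below -/
import Mathlib

section
/- Let z₁,…,z_N ∈ ℝ^d be points with binary labels y₁,…,y_N ∈ {0,1} that are linearly separable, i.e. there exist v ∈ ℝ^d with ‖v‖ = 1 and b ∈ ℝ such that vᵀz_i > b whenever y_i = 1 and vᵀz_i < b whenever y_i = 0. Then there exist prototypes w₀, w₁ ∈ ℝ^d and, for every λ > 0, symmetric positive semidefinite real d×d matrices M₀(λ), M₁(λ) such that: (i) for every i ∈ {1,…,N}, the pointwise cross-entropy loss L(z_i, y_i) of the quadratic probe with parameters (w₀, w₁, M₀(λ), M₁(λ)) tends to 0 as λ → +∞, and (ii) for each k ∈ {0,1}, ‖M_k(λ)‖_F → +∞ as λ → +∞. -/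
open Matrix Filter

/-- Mahalanobis-type quadratic form `‖z − w‖²_M = (z − w)ᵀ M (z − w)`. -/
noncomputable def quadDist {d : ℕ} (M : Matrix (Fin d) (Fin d) ℝ) (z w : Fin d → ℝ) : ℝ :=
  (z - w) ⬝ᵥ M.mulVec (z - w)

/-- Frobenius norm of a matrix: `‖M‖_F = √(∑ i j, M i j ^ 2)`. -/
noncomputable def frobNorm {d : ℕ} (M : Matrix (Fin d) (Fin d) ℝ) : ℝ :=
  Real.sqrt (∑ i, ∑ j, (M i j) ^ 2)

/-- Quadratic-probe probability of class `k` at point `z`. -/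
noncomputable def qProb {d : ℕ} (w : Fin 2 → Fin d → ℝ)
    (M : Fin 2 → Matrix (Fin d) (Fin d) ℝ) (k : Fin 2) (z : Fin d → ℝ) : ℝ :=
  Real.exp (-(quadDist (M k) z (w k))) /
    (Real.exp (-(quadDist (M 0) z (w 0))) + Real.exp (-(quadDist (M 1) z (w 1))))

/-- Pointwise cross-entropy loss of the quadratic probe: `L(z, y) = −log p_y(z)`. -/
noncomputable def ceLoss {d : ℕ} (w : Fin 2 → Fin d → ℝ)
    (M : Fin 2 → Matrix (Fin d) (Fin d) ℝ) (z : Fin d → ℝ) (y : Fin 2) : ℝ :=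
  -Real.log (qProb w M y z)

/-!
Take the rank-one metrics `M₀(λ) = M₁(λ) = λ vvᵀ` and the prototypes `w₀ = (b − 1) v`,
`w₁ = (b + 1) v` on the separating normal. Then `‖z − (b ∓ 1) v‖²_{λvvᵀ} = λ (vᵀz − b ± 1)²`, so at
a training point the log-odds of the wrong class against the right one are `−4λ |vᵀz − b|`, which
tends to `−∞` by strict separation; the loss `log (1 + e^{−4λ |vᵀz − b|})` therefore tends to `0`,
while `‖λ vvᵀ‖_F = λ ‖v‖² = λ`.
-/

lemma neg_log_exp_neg_div (a c : ℝ) :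
    -Real.log (Real.exp (-a) / (Real.exp (-a) + Real.exp (-c))) =
      Real.log (1 + Real.exp (a - c)) := by
  rw [← Real.log_inv, inv_div, add_div, div_self (Real.exp_ne_zero _), ← Real.exp_sub]
  ring_nf

lemma ceLoss_eq_log_one_add_exp {d : ℕ} (w : Fin 2 → Fin d → ℝ)
    (M : Fin 2 → Matrix (Fin d) (Fin d) ℝ) (z : Fin d → ℝ) (k : Fin 2) :
    ceLoss w M z k =
      Real.log (1 + Real.exp (quadDist (M k) z (w k) - quadDist (M (1 - k)) z (w (1 - k)))) := by
  fin_cases k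
  · exact neg_log_exp_neg_div _ _
  · rw [ceLoss, qProb, add_comm]
    exact neg_log_exp_neg_div _ _

lemma tendsto_log_one_add_exp_mul_atTop {C : ℝ} (hC : C < 0) :
    Tendsto (fun t : ℝ => Real.log (1 + Real.exp (t * C))) atTop (nhds 0) := by
  have hexp : Tendsto (fun t : ℝ => Real.exp (t * C)) atTop (nhds 0) :=
    Real.tendsto_exp_atBot.comp (tendsto_id.atTop_mul_const_of_neg hC)
  simpa using (hexp.const_add 1).log (by norm_num)

lemma dotProduct_smul_vecMulVec_mulVec {n : Type*} [Fintype n] (v x : n → ℝ) (c : ℝ) :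
    x ⬝ᵥ (c • vecMulVec v v) *ᵥ x = c * (v ⬝ᵥ x) ^ 2 := by
  rw [smul_mulVec, vecMulVec_mulVec, op_smul_eq_smul, dotProduct_smul, dotProduct_smul,
    dotProduct_comm x v]
  simp only [smul_eq_mul]
  ring

lemma quadDist_smul_vecMulVec_smul {d : ℕ} {v : Fin d → ℝ} (hv : v ⬝ᵥ v = 1)
    (c a : ℝ) (z : Fin d → ℝ) :
    quadDist (c • vecMulVec v v) z (a • v) = c * (v ⬝ᵥ z - a) ^ 2 := by
  rw [quadDist, dotProduct_smul_vecMulVec_mulVec, dotProduct_sub, dotProduct_smul, hv,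
    smul_eq_mul, mul_one]

lemma frobNorm_smul_vecMulVec {d : ℕ} (c : ℝ) (v : Fin d → ℝ) :
    frobNorm (c • vecMulVec v v) = |c| * (v ⬝ᵥ v) := by
  have hsum : ∑ i, ∑ j, ((c • vecMulVec v v) i j) ^ 2 = (c * (v ⬝ᵥ v)) ^ 2 := by
    simp only [Matrix.smul_apply, vecMulVec_apply, smul_eq_mul, dotProduct, Finset.mul_sum, sq,
      Finset.sum_mul]
    refine Finset.sum_congr rfl fun i _ => Finset.sum_congr rfl fun j _ => ?_
    ring
  rw [frobNorm, hsum, Real.sqrt_sq_eq_abs, abs_mul,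
    abs_of_nonneg (a := v ⬝ᵥ v) (by simpa using dotProduct_self_star_nonneg v)]

lemma tendsto_ceLoss_smul_vecMulVec {d : ℕ} {v : Fin d → ℝ} (hv : v ⬝ᵥ v = 1) (b : ℝ)
    (x : Fin d → ℝ) (k : Fin 2) (h1 : k = 1 → b < v ⬝ᵥ x) (h0 : k = 0 → v ⬝ᵥ x < b) :
    Tendsto (fun c : ℝ => ceLoss ![(b - 1) • v, (b + 1) • v] (fun _ => c • vecMulVec v v) x k)
      atTop (nhds 0) := by
  fin_cases k
  · refine (tendsto_log_one_add_exp_mul_atTop (C := 4 * (v ⬝ᵥ x - b)) ?_).congr fun c => ?_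
    · linarith [h0 rfl]
    · simp only [Fin.zero_eta, Fin.isValue, ceLoss_eq_log_one_add_exp, cons_val_zero,
        quadDist_smul_vecMulVec_smul hv, sub_zero, cons_val_one, cons_val_fin_one]
      congr 3
      ring
  · refine (tendsto_log_one_add_exp_mul_atTop (C := 4 * (b - v ⬝ᵥ x)) ?_).congr fun c => ?_
    · linarith [h1 rfl]
    · simp only [Fin.mk_one, Fin.isValue, ceLoss_eq_log_one_add_exp, cons_val_one,
        cons_val_fin_one, quadDist_smul_vecMulVec_smul hv, sub_self, cons_val_zero]
      congr 3
      ring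

/-- If the labeled points are linearly separable, there are prototypes `w₀, w₁` and, for every
`λ > 0`, symmetric PSD matrices `M₀(λ), M₁(λ)` such that every pointwise cross-entropy loss of
the quadratic probe tends to `0` while the Frobenius norms of the `M_k(λ)` blow up, as
`λ → +∞`. -/
theorem quadratic_probe_degenerate {d N : ℕ}
    (z : Fin N → Fin d → ℝ) (y : Fin N → Fin 2)
    (v : Fin d → ℝ) (b : ℝ) (hv : Real.sqrt (v ⬝ᵥ v) = 1)
    (hsep1 : ∀ i, y i = 1 → b < v ⬝ᵥ z i)
    (hsep0 : ∀ i, y i = 0 → v ⬝ᵥ z i < b) :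
    ∃ w : Fin 2 → Fin d → ℝ, ∃ M : ℝ → Fin 2 → Matrix (Fin d) (Fin d) ℝ,
      (∀ lam : ℝ, 0 < lam → ∀ k, (M lam k).PosSemidef) ∧
      (∀ i, Tendsto (fun lam : ℝ => ceLoss w (M lam) (z i) (y i)) atTop (nhds 0)) ∧
      (∀ k, Tendsto (fun lam : ℝ => frobNorm (M lam k)) atTop atTop) := by
  have hvv : v ⬝ᵥ v = 1 := Real.sqrt_eq_one.mp hv
  refine ⟨![(b - 1) • v, (b + 1) • v], fun lam _ => lam • vecMulVec v v, ?_, ?_, ?_⟩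
  · intro lam hlam k
    simpa using (posSemidef_vecMulVec_self_star v).smul hlam.le
  · exact fun i => tendsto_ceLoss_smul_vecMulVec hvv b (z i) (y i) (hsep1 i) (hsep0 i)
  · intro k
    simpa only [frobNorm_smul_vecMulVec, hvv, mul_one] using tendsto_abs_atTop_atTop
end

section
/- Let S be a symmetric positive definite real d×d matrix. Then for every symmetric positive definite real d×d matrix M, tr(M S) − log det M ≥ d + log det S, with equality if and only if M = S⁻¹. In particular, the function M ↦ tr(M S) − log det M attains its unique global minimum over the set of symmetric positive definite matrices at M = S⁻¹. -/
/-!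
Write `S = R * R` with `R` the positive square root of `S`. Then `A = R * M * R` is positive
definite with `tr A = tr (M S)` and `det A = det M * det S`, so the claim becomes
`tr A - log det A ≥ d` with equality iff `A = 1`. In an eigenbasis of `A` the left side is
`∑ λ - log λ`, and each term is at least `1`, with equality only at `λ = 1`.
-/

open Matrix

namespace Real

theorem one_le_sub_log {x : ℝ} (hx : 0 < x) : 1 ≤ x - log x := by
  linarith [log_le_sub_one_of_pos hx]

theorem sub_log_eq_one_iff {x : ℝ} (hx : 0 < x) : x - log x = 1 ↔ x = 1 := by
  refine ⟨fun h => by_contra fun hx1 => ?_, fun h => by simp [h]⟩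
  linarith [log_lt_sub_one_of_pos hx hx1]

end Real

open Real

namespace Matrix

variable {n : Type*} [Fintype n] [DecidableEq n]

theorem IsHermitian.eq_one_of_eigenvalues_eq_one {𝕜 : Type*} [RCLike 𝕜] {A : Matrix n n 𝕜}
    (hA : A.IsHermitian) (h : ∀ i, hA.eigenvalues i = 1) : A = 1 := by
  rw [hA.spectral_theorem, funext h, Function.comp_def, RCLike.ofReal_one, diagonal_one, map_one]

theorem IsHermitian.trace_sub_log_det {A : Matrix n n ℝ} (hA : A.IsHermitian)
    (hdet : A.det ≠ 0) :
    A.trace - log A.det = ∑ i, (hA.eigenvalues i - log (hA.eigenvalues i)) := by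
  have hdet' : ∏ i, hA.eigenvalues i ≠ 0 := by simpa [hA.det_eq_prod_eigenvalues] using hdet
  rw [Finset.sum_sub_distrib, ← log_prod (Finset.prod_ne_zero_iff.mp hdet')]
  simp [hA.trace_eq_sum_eigenvalues, hA.det_eq_prod_eigenvalues]

theorem PosDef.card_le_trace_sub_log_det {A : Matrix n n ℝ} (hA : A.PosDef) :
    (Fintype.card n : ℝ) ≤ A.trace - log A.det := by
  rw [hA.1.trace_sub_log_det hA.det_pos.ne', Fintype.card_eq_sum_ones, Nat.cast_sum, Nat.cast_one]
  exact Finset.sum_le_sum fun i _ => one_le_sub_log (hA.eigenvalues_pos i)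

theorem PosDef.trace_sub_log_det_eq_card_iff {A : Matrix n n ℝ} (hA : A.PosDef) :
    A.trace - log A.det = Fintype.card n ↔ A = 1 := by
  refine ⟨fun h => hA.1.eq_one_of_eigenvalues_eq_one fun i => ?_, by rintro rfl; simp⟩
  rw [hA.1.trace_sub_log_det hA.det_pos.ne', Fintype.card_eq_sum_ones, Nat.cast_sum, Nat.cast_one,
    eq_comm, Finset.sum_eq_sum_iff_of_le fun i _ => (one_le_sub_log (hA.eigenvalues_pos i)).ge] at h
  exact (sub_log_eq_one_iff (hA.eigenvalues_pos i)).mp (h i (Finset.mem_univ i)).symm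

theorem mul_mul_self_eq_one_iff {R : Type*} [CommRing R] {B M : Matrix n n R} :
    B * M * B = 1 ↔ M * (B * B) = 1 := by
  rw [mul_assoc, mul_eq_one_comm, mul_assoc]

theorem trace_sub_log_det_mul_mul_self {B M : Matrix n n ℝ} (hB : B.det ≠ 0) (hM : M.det ≠ 0) :
    (B * M * B).trace - log (B * M * B).det =
      (M * (B * B)).trace - log M.det - log (B * B).det := by
  have htrace : (B * M * B).trace = (M * (B * B)).trace := by
    rw [trace_mul_comm, ← mul_assoc, trace_mul_comm]
  have hdet : (B * M * B).det = M.det * (B * B).det := by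
    simp only [det_mul]; ring
  rw [htrace, hdet, log_mul hM (by simpa using hB)]
  ring

open scoped MatrixOrder in
theorem PosDef.exists_isHermitian_mul_self_eq {S : Matrix n n ℝ} (hS : S.PosDef) :
    ∃ R : Matrix n n ℝ, R.IsHermitian ∧ R.det ≠ 0 ∧ R * R = S := by
  have hRR := CFC.sqrt_mul_sqrt_self S hS.posSemidef.nonneg
  refine ⟨CFC.sqrt S, (CFC.sqrt_nonneg S).posSemidef.isHermitian,
    fun h => hS.det_pos.ne' ?_, hRR⟩
  rw [← hRR, det_mul, h, zero_mul]

end Matrix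

/-- For symmetric positive definite `S` and every symmetric positive definite `M`:
`tr (M S) − log det M ≥ d + log det S`, with equality iff `M = S⁻¹`; i.e. the map
`M ↦ tr (M S) − log det M` attains its unique global minimum over positive definite matrices
at `M = S⁻¹`. -/
theorem trace_sub_log_det_minimized_at_inv {d : ℕ}
    (S : Matrix (Fin d) (Fin d) ℝ) (hS : S.PosDef) :
    ∀ M : Matrix (Fin d) (Fin d) ℝ, M.PosDef →
      ((d : ℝ) + Real.log S.det ≤ (M * S).trace - Real.log M.det ∧
        ((M * S).trace - Real.log M.det = (d : ℝ) + Real.log S.det ↔ M = S⁻¹)) := by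
  intro M hM
  obtain ⟨R, hR, hRdet, rfl⟩ := hS.exists_isHermitian_mul_self_eq
  have hA : (R * M * R).PosDef := by
    have := hM.conjTranspose_mul_mul_same (mulVec_injective_of_det_ne_zero hRdet)
    rwa [hR.eq] at this
  have hshift := trace_sub_log_det_mul_mul_self hRdet hM.det_pos.ne'
  have hinv : M * (R * R) = 1 ↔ M = (R * R)⁻¹ :=
    ⟨fun h => (inv_eq_left_inv h).symm,
      by rintro rfl; exact nonsing_inv_mul _ ((isUnit_iff_isUnit_det _).mp hS.isUnit)⟩
  have hle := hA.card_le_trace_sub_log_det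
  have hiff := hA.trace_sub_log_det_eq_card_iff
  rw [hshift, Fintype.card_fin] at hle hiff
  refine ⟨by linarith, ?_⟩
  rw [← hinv, ← mul_mul_self_eq_one_iff, ← hiff]
  constructor <;> intro h <;> linarith
end

section
/- Let z₁,…,z_N ∈ ℝ^d with labels y₁,…,y_N ∈ {0,1} be linearly separable: there exist v ∈ ℝ^d with ‖v‖₂ = 1 and b ∈ ℝ with vᵀz_i > b when y_i = 1 and vᵀz_i < b when y_i = 0. Set w₀ := (b − 1)v, w₁ := (b + 1)v, and for a fixed symmetric positive semidefinite d×d matrix M₀ define M(λ) := M₀ + λ v vᵀ. Then for every i ∈ {1,…,N}, the difference of Mahalanobis distances ‖z_i − w_{1−y_i}‖²_{M(λ)} − ‖z_i − w_{y_i}‖²_{M(λ)} tends to +∞ as λ → +∞. -/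
open Matrix Filter

lemma quad_expand {d : ℕ} (M₀ : Matrix (Fin d) (Fin d) ℝ) (v u : Fin d → ℝ) (lam : ℝ) :
    u ⬝ᵥ (M₀ + lam • Matrix.vecMulVec v v).mulVec u
      = u ⬝ᵥ M₀.mulVec u + lam * (v ⬝ᵥ u)^2 := by
  have h : Matrix.vecMulVec v v *ᵥ u = (v ⬝ᵥ u) • v := by
    ext i
    simp [Matrix.vecMulVec, Matrix.mulVec, dotProduct, Finset.mul_sum, mul_comm,
      mul_assoc, mul_left_comm]
  simp [add_mulVec, smul_mulVec, dotProduct_add, dotProduct_smul, h, sq,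
    dotProduct_comm u v, mul_comm]

/-- Under linear separability, with prototypes `w₀ = (b − 1) v`, `w₁ = (b + 1) v` and precision
matrices `M(λ) = M₀ + λ v vᵀ`, the difference of Mahalanobis distances
`‖zᵢ − w_{1−yᵢ}‖²_{M(λ)} − ‖zᵢ − w_{yᵢ}‖²_{M(λ)}` tends to `+∞` as `λ → +∞`. -/
theorem maha_difference_tendsto_atTop {d N : ℕ}
    (z : Fin N → Fin d → ℝ) (y : Fin N → Fin 2)
    (v : Fin d → ℝ) (b : ℝ) (hv : Real.sqrt (v ⬝ᵥ v) = 1)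
    (hsep1 : ∀ i, y i = 1 → b < v ⬝ᵥ z i)
    (hsep0 : ∀ i, y i = 0 → v ⬝ᵥ z i < b)
    (M₀ : Matrix (Fin d) (Fin d) ℝ) (hM₀ : M₀.PosSemidef)
    (w : Fin 2 → Fin d → ℝ) (hw0 : w 0 = (b - 1) • v) (hw1 : w 1 = (b + 1) • v) :
    ∀ i, Tendsto (fun lam : ℝ =>
        quadDist (M₀ + lam • Matrix.vecMulVec v v) (z i) (w (1 - y i)) -
          quadDist (M₀ + lam • Matrix.vecMulVec v v) (z i) (w (y i))) atTop atTop := by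
  have h0 : 0 ≤ v ⬝ᵥ v := by
    exact Finset.sum_nonneg fun j _ => mul_self_nonneg _
  have hvv : v ⬝ᵥ v = 1 := by nlinarith [Real.sq_sqrt h0]
  intro i
  have e0 : v ⬝ᵥ (z i - w 0) = v ⬝ᵥ z i - (b - 1) := by
    simp [hw0, dotProduct_sub, dotProduct_smul, hvv]
  have e1 : v ⬝ᵥ (z i - w 1) = v ⬝ᵥ z i - (b + 1) := by
    simp [hw1, dotProduct_sub, dotProduct_smul, hvv]
  have hc : 0 < (v ⬝ᵥ (z i - w (1 - y i)))^2 - (v ⬝ᵥ (z i - w (y i)))^2 := by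
    have h2 : y i = 0 ∨ y i = 1 := by omega
    rcases h2 with h | h
    · have hs := hsep0 i h
      rw [h]
      norm_num [e0, e1]
      nlinarith
    · have hs := hsep1 i h
      rw [h]
      norm_num [e0, e1]
      nlinarith
  have key : (fun lam : ℝ =>
      quadDist (M₀ + lam • Matrix.vecMulVec v v) (z i) (w (1 - y i)) -
        quadDist (M₀ + lam • Matrix.vecMulVec v v) (z i) (w (y i)))
      = fun lam : ℝ =>
        (quadDist M₀ (z i) (w (1 - y i)) - quadDist M₀ (z i) (w (y i)))
          + lam * ((v ⬝ᵥ (z i - w (1 - y i)))^2 - (v ⬝ᵥ (z i - w (y i)))^2) := by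
    funext lam
    simp only [quadDist, quad_expand]
    ring
  rw [key]
  exact tendsto_atTop_add_const_left atTop _ (tendsto_id.atTop_mul_const hc)
end
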